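/- arXiv:1212.5302 — 3 statements merged into one kernel-verified Lean document; each statement's English description precedes it below -/
import Mathlib

section
/- Let a be a multisegment and suppose there are integers x and m ≥ 1 such that the end (maximum) of every segment of a lies in Finset.Icc x (x+m−1). Then every segment of MWA(a) has cardinality at most m. -/
/-- A Speh quadruple: integers `A ≤ B`, `A ≤ C` with `A + D = B + C`. -/
def SpehQuad (A B C D : ℤ) : Prop := A ≤ B ∧ A ≤ C ∧ A + D = B + C

/-- The integer segment (as a finite set) associated to a pair `(b, e)`. -/
noncomputable def segSet (s : ℤ × ℤ) : Finset ℤ := Finset.Icc s.1 s.2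

/-- A finite set of integers is a ℤ-segment if it equals `Finset.Icc x y` for some `x ≤ y`. -/
def IsZSegment (S : Finset ℤ) : Prop := ∃ x y : ℤ, x ≤ y ∧ S = Finset.Icc x y

/-- The rectangular multisegment `m(A,B,C,D)`: the segments `[A+j, B+j]` for `j = 0, …, C−A`.
(Here `D = B + C − A` is determined by the other three entries.) -/
def rectMulti (A B C : ℤ) : Multiset (ℤ × ℤ) :=
  (Multiset.range (C - A + 1).toNat).map fun j => (A + (j : ℤ), B + (j : ℤ))

/-- A multiset of pairs represents a multisegment when each pair `(b,e)` satisfies `b ≤ e`. -/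
def ValidMS (a : Multiset (ℤ × ℤ)) : Prop := ∀ s ∈ a, s.1 ≤ s.2

/-- Total number of points of a multisegment (used as fuel for the MW algorithm). -/
def msSize (a : Multiset (ℤ × ℤ)) : ℕ := (a.map fun s => (s.2 + 1 - s.1).toNat).sum

/-- Removing the last element of a segment: `[b,e] ↦ [b,e−1]`, omitted if empty. -/
def truncate (s : ℤ × ℤ) : Multiset (ℤ × ℤ) :=
  if s.1 ≤ s.2 - 1 then {(s.1, s.2 - 1)} else 0

/-- Maximum of a multiset of integers (default `0` on the empty multiset). -/
def msMaxD (m : Multiset ℤ) : ℤ := WithBot.unbotD 0 m.toFinset.max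

/-- The chain of stages of one step of the Mœglin–Waldspurger algorithm.
`chainAux fuel rem b e` looks in `rem` for a segment with end `e` and beginning `< b`,
of maximal beginning; if found, it is removed, its truncation is recorded, and the chain
continues with end `e − 1`.  Returns the number of segments chosen together with the
resulting multisegment (remaining segments plus truncations of chosen ones). -/
def chainAux : ℕ → Multiset (ℤ × ℤ) → ℤ → ℤ → ℕ × Multiset (ℤ × ℤ)
  | 0, rem, _, _ => (0, rem)
  | n + 1, rem, b, e =>
    let S := rem.filter fun s => s.2 = e ∧ s.1 < b
    if S = 0 then (0, rem)
    else
      let b' := msMaxD (S.map Prod.fst)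
      let r := chainAux n (rem.erase (b', e)) b' (e - 1)
      (r.1 + 1, truncate (b', e) + r.2)

/-- One step of the Mœglin–Waldspurger algorithm on a (nonempty) multisegment:
returns the segment `Γ = [x−k+1, x]` and the multisegment `a′`. -/
def mwaStep (a : Multiset (ℤ × ℤ)) : (ℤ × ℤ) × Multiset (ℤ × ℤ) :=
  let x := msMaxD (a.map Prod.snd)
  let b1 := msMaxD ((a.filter fun s => s.2 = x).map Prod.fst)
  let r := chainAux a.card (a.erase (b1, x)) b1 (x - 1)
  ((x - r.1, x), truncate (b1, x) + r.2)

/-- The Mœglin–Waldspurger algorithm, with fuel. -/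
def mwaAux : ℕ → Multiset (ℤ × ℤ) → Multiset (ℤ × ℤ)
  | 0, _ => 0
  | n + 1, a =>
    if a = 0 then 0
    else
      let r := mwaStep a
      r.1 ::ₘ mwaAux n r.2

/-- The Mœglin–Waldspurger algorithm, computing the Zelevinsky dual of a multisegment.
(The fuel `msSize a` suffices: each step strictly decreases the total number of points.) -/
def MWA (a : Multiset (ℤ × ℤ)) : Multiset (ℤ × ℤ) := mwaAux (msSize a) a

/-- Two segments are linked if their union is a ℤ-segment different from both of them. -/
def Linked (s t : ℤ × ℤ) : Prop :=
  IsZSegment (segSet s ∪ segSet t) ∧ segSet s ∪ segSet t ≠ segSet s ∧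
    segSet s ∪ segSet t ≠ segSet t

/-- The intersection of two linked segments, as a multisegment (empty if disjoint). -/
def segInterM (s t : ℤ × ℤ) : Multiset (ℤ × ℤ) :=
  if max s.1 t.1 ≤ min s.2 t.2 then {(max s.1 t.1, min s.2 t.2)} else 0

/-- Elementary linking operation: `Prec c b` holds when `b` contains linked segments
`s, t` and `c` is obtained from `b` by replacing them with `s ∪ t` (and `s ∩ t` if nonempty). -/
def Prec (c b : Multiset (ℤ × ℤ)) : Prop :=
  ∃ s t rest, b = s ::ₘ t ::ₘ rest ∧ Linked s t ∧
    c = (min s.1 t.1, max s.2 t.2) ::ₘ (segInterM s t + rest)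

/-- The linking (strict) order on multisegments. -/
def MLt : Multiset (ℤ × ℤ) → Multiset (ℤ × ℤ) → Prop := Relation.TransGen Prec

/-- Strong ordering of Speh quadruples. -/
def StrongLt (A1 B1 C1 D1 A2 B2 C2 D2 : ℤ) : Prop :=
  A1 < A2 ∧ B1 < B2 ∧ C1 < C2 ∧ D1 < D2

/-- The set `I(A,B,C,D)` attached to a Speh quadruple. -/
def ISet (A B C D : ℤ) : Set ℤ := {z : ℤ | z ≤ A - 1} ∪ ↑(Finset.Icc (B + 1) (D + 1))

/-- Pattern: integers `i < j < k` with `i, k ∈ I \ J` and `j ∈ J \ I`. -/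
def PPat (I J : Set ℤ) : Prop :=
  ∃ i j k : ℤ, i < j ∧ j < k ∧ i ∈ I \ J ∧ j ∈ J \ I ∧ k ∈ I \ J

/-- Reflection of a multisegment: `[b,e] ↦ [−e,−b]`. -/
def reflMS (a : Multiset (ℤ × ℤ)) : Multiset (ℤ × ℤ) := a.map fun s => (-s.2, -s.1)

/-!
The invariant is the maximal length of a chain in `a`: a sequence of segments whose beginnings
and ends both decrease strictly. The segments `Δ₁, …, Δₖ` chosen in one step of the algorithm
form such a chain, so `Γ`, of length `k`, is no longer than it. Truncating `Δ₁, …, Δₖ` creates no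
longer chains: in a chain of `a′` whose last truncated segment is `[bᵢ, x - i]`, the part up to it
can be replaced by `Δ₁, …, Δᵢ`, which is no shorter unless the chain passes through every end
`x, x - 1, …, x - i`; the greedy choice of the `Δⱼ` rules this out. Ends in an interval of length
`m` bound the length of every chain by `m`.
-/

lemma Multiset.le_of_le_add_of_forall_notMem {α : Type*} {u v w : Multiset α} (h : u ≤ v + w)
    (huv : ∀ s ∈ u, s ∉ v) : u ≤ w := by
  classical
  rw [Multiset.le_iff_count] at h ⊢
  intro s
  by_cases hs : s ∈ u
  · simpa [Multiset.count_eq_zero.2 (huv s hs)] using h s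
  · simp [Multiset.count_eq_zero_of_notMem hs]

lemma List.exists_eq_append_cons_forall_not {α : Type*} {p : α → Prop} {L : List α}
    (h : ∃ s ∈ L, p s) : ∃ M t N, L = M ++ t :: N ∧ p t ∧ ∀ s ∈ N, ¬ p s := by
  induction L with
  | nil => simp at h
  | cons u L ih =>
    by_cases hL : ∃ s ∈ L, p s
    · obtain ⟨M, t, N, rfl, ht, hN⟩ := ih hL
      exact ⟨u :: M, t, N, rfl, ht, hN⟩
    · push Not at hL
      obtain ⟨s, hs, hps⟩ := h
      rcases List.mem_cons.1 hs with rfl | hs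
      · exact ⟨[], s, L, rfl, hps, hL⟩
      · exact absurd hps (hL s hs)

lemma msMaxD_mem {M : Multiset ℤ} (h : M ≠ 0) : msMaxD M ∈ M := by
  obtain ⟨z, hz⟩ := Finset.max_of_nonempty (Multiset.toFinset_nonempty.2 h)
  rw [msMaxD, hz]
  exact Multiset.mem_toFinset.1 (Finset.mem_of_max hz)

lemma le_msMaxD {M : Multiset ℤ} {z : ℤ} (h : z ∈ M) : z ≤ msMaxD M := by
  obtain ⟨y, hy⟩ := Finset.max_of_mem (Multiset.mem_toFinset.2 h)
  rw [msMaxD, hy]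
  exact WithBot.coe_le_coe.1 (hy ▸ Finset.le_max (Multiset.mem_toFinset.2 h))

section FilterMax

variable {a : Multiset (ℤ × ℤ)} {p : ℤ × ℤ → Prop} [DecidablePred p]

lemma exists_fst_eq_msMaxD_filter (h : a.filter p ≠ 0) :
    ∃ s ∈ a, p s ∧ s.1 = msMaxD ((a.filter p).map Prod.fst) := by
  obtain ⟨s, hs, hs1⟩ := Multiset.mem_map.1 (msMaxD_mem (mt Multiset.map_eq_zero.1 h))
  exact ⟨s, (Multiset.mem_filter.1 hs).1, (Multiset.mem_filter.1 hs).2, hs1⟩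

lemma fst_le_msMaxD_filter {s : ℤ × ℤ} (hs : s ∈ a) (hps : p s) :
    s.1 ≤ msMaxD ((a.filter p).map Prod.fst) :=
  le_msMaxD (Multiset.mem_map_of_mem _ (Multiset.mem_filter.2 ⟨hs, hps⟩))

end FilterMax

lemma eq_of_mem_truncate {c s : ℤ × ℤ} (hs : s ∈ truncate c) : s = (c.1, c.2 - 1) := by
  unfold truncate at hs
  split_ifs at hs
  · exact Multiset.mem_singleton.1 hs
  · simp at hs

lemma eq_of_mem_bind_truncate {C : List (ℤ × ℤ)} {s : ℤ × ℤ}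
    (hs : s ∈ (C : Multiset (ℤ × ℤ)).bind truncate) : ∃ c ∈ C, s = (c.1, c.2 - 1) :=
  let ⟨c, hc, hsc⟩ := Multiset.mem_bind.1 hs
  ⟨c, hc, eq_of_mem_truncate hsc⟩

lemma mem_bind_truncate_of_fst_lt {c s : ℤ × ℤ} {C : List (ℤ × ℤ)}
    (hs : s ∈ ((c :: C : List (ℤ × ℤ)) : Multiset (ℤ × ℤ)).bind truncate) (hsc : s.1 < c.1) :
    s ∈ (C : Multiset (ℤ × ℤ)).bind truncate := by
  rw [← Multiset.cons_coe, Multiset.cons_bind, Multiset.mem_add] at hs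
  refine hs.resolve_left fun hs' => ?_
  rw [eq_of_mem_truncate hs'] at hsc
  exact lt_irrefl _ hsc

def Dominates (s t : ℤ × ℤ) : Prop := t.1 < s.1 ∧ t.2 < s.2

lemma Dominates.trans {s t u : ℤ × ℤ} (hst : Dominates s t) (htu : Dominates t u) :
    Dominates s u :=
  ⟨htu.1.trans hst.1, htu.2.trans hst.2⟩

def ChainLengthLE (n : ℤ) (a : Multiset (ℤ × ℤ)) : Prop :=
  ∀ L : List (ℤ × ℤ), (L : Multiset (ℤ × ℤ)) ≤ a → L.Pairwise Dominates → (L.length : ℤ) ≤ n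

lemma length_le_of_pairwise_append {M : List (ℤ × ℤ)} {t : ℤ × ℤ} {e : ℤ}
    (hchain : (M ++ [t]).Pairwise Dominates) (he : ∀ s ∈ M ++ [t], s.2 ≤ e) :
    (M.length : ℤ) ≤ e - t.2 := by
  induction M generalizing e with
  | nil => simpa using he
  | cons u M ih =>
    rw [List.cons_append, List.pairwise_cons] at hchain
    have hM := ih hchain.2 (e := u.2 - 1) fun s hs => by have := (hchain.1 s hs).2; omega
    have hu := he u List.mem_cons_self
    push_cast [List.length_cons]
    omega

lemma chainLengthLE_of_snd_mem_Icc {a : Multiset (ℤ × ℤ)} {x m : ℤ} (hm : 0 ≤ m)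
    (hends : ∀ s ∈ a, s.2 ∈ Finset.Icc x (x + m - 1)) : ChainLengthLE m a := by
  intro L hL hchain
  obtain rfl | ⟨M, t, rfl⟩ := L.eq_nil_or_concat
  · simpa using hm
  rw [List.concat_eq_append] at hchain hL ⊢
  have hmem : ∀ s ∈ M ++ [t], s.2 ∈ Finset.Icc x (x + m - 1) :=
    fun s hs => hends s (Multiset.mem_of_le hL (Multiset.mem_coe.2 hs))
  have hM := length_le_of_pairwise_append hchain fun s hs => (Finset.mem_Icc.1 (hmem s hs)).2
  have ht := (Finset.mem_Icc.1 (hmem t (by simp))).1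
  simp only [List.length_append, List.length_singleton, Nat.cast_add, Nat.cast_one]
  omega

lemma pairwise_append_cons_of_le {C₁ C₂ N : List (ℤ × ℤ)} {d t : ℤ × ℤ}
    (hC : (C₁ ++ d :: C₂).Pairwise Dominates) (hN : (t :: N).Pairwise Dominates)
    (hdt : t.1 ≤ d.1 ∧ t.2 ≤ d.2) : (C₁ ++ d :: N).Pairwise Dominates := by
  have hdN : ∀ v ∈ N, Dominates d v := fun v hv =>
    have htv := List.rel_of_pairwise_cons hN hv
    ⟨htv.1.trans_le hdt.1, htv.2.trans_le hdt.2⟩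
  obtain ⟨hC₁, hdC₂, hC₁d⟩ := List.pairwise_append.1 hC
  refine List.pairwise_append.2 ⟨hC₁, List.pairwise_cons.2 ⟨hdN, hN.of_cons⟩, ?_⟩
  intro u hu w hw
  have hud := hC₁d u hu d List.mem_cons_self
  rcases List.mem_cons.1 hw with rfl | hw
  · exact hud
  · exact hud.trans (hdN w hw)

/-- `C = [Δ₁, Δ₂, …]` is a chain of the kind built by one step of the algorithm from `C + R`:
`Δᵢ` ends at `e - i + 1` and has the largest beginning, below that of `Δᵢ₋₁` (below `b` for
`Δ₁`), among the segments of `R` with that end. -/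
def IsGreedyChain (R : Multiset (ℤ × ℤ)) : ℤ → ℤ → List (ℤ × ℤ) → Prop
  | _, _, [] => True
  | b, e, c :: C =>
    c.2 = e ∧ c.1 < b ∧ (∀ s ∈ R, s.2 = e → s.1 < b → s.1 ≤ c.1) ∧ IsGreedyChain R c.1 (e - 1) C

namespace IsGreedyChain

variable {R : Multiset (ℤ × ℤ)} {b e : ℤ} {C : List (ℤ × ℤ)}

lemma fst_lt (h : IsGreedyChain R b e C) : ∀ c ∈ C, c.1 < b := by
  induction C generalizing b e with
  | nil => simp
  | cons c C ih =>
    obtain ⟨-, hcb, -, hC⟩ := h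
    simp only [List.mem_cons, forall_eq_or_imp]
    exact ⟨hcb, fun d hd => (ih hC d hd).trans hcb⟩

lemma snd_le (h : IsGreedyChain R b e C) : ∀ c ∈ C, c.2 ≤ e := by
  induction C generalizing b e with
  | nil => simp
  | cons c C ih =>
    obtain ⟨hce, -, -, hC⟩ := h
    simp only [List.mem_cons, forall_eq_or_imp]
    exact ⟨hce.le, fun d hd => by have := ih hC d hd; omega⟩

lemma pairwise (h : IsGreedyChain R b e C) : C.Pairwise Dominates := by
  induction C generalizing b e with
  | nil => exact List.Pairwise.nil
  | cons c C ih =>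
    obtain ⟨hce, -, -, hC⟩ := h
    refine List.Pairwise.cons (fun d hd => ⟨hC.fst_lt d hd, ?_⟩) (ih hC)
    have := hC.snd_le d hd
    omega

lemma snd_eq_of_eq_append {C₁ C₂ : List (ℤ × ℤ)} {d : ℤ × ℤ}
    (h : IsGreedyChain R b e (C₁ ++ d :: C₂)) : d.2 = e - C₁.length := by
  induction C₁ generalizing b e with
  | nil => simpa using h.1
  | cons c C₁ ih =>
    rw [ih h.2.2.2, List.length_cons]
    push_cast
    ring

lemma snd_le_of_mem_bind_truncate (h : IsGreedyChain R b e C) {s : ℤ × ℤ}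
    (hs : s ∈ (C : Multiset (ℤ × ℤ)).bind truncate) : s.2 ≤ e - 1 := by
  obtain ⟨c, hc, rfl⟩ := eq_of_mem_bind_truncate hs
  have := h.snd_le c hc
  dsimp only
  omega

/-- A chain of `C.bind truncate + R` cannot run through all the ends `e, e - 1, …` down to a
truncated segment of `C`: by the greedy choice, level by level its beginnings stay at most
those of `C`, whereas the truncation of `Δᵢ` keeps the beginning of `Δᵢ`. -/
lemma length_lt_of_pairwise_append {M : List (ℤ × ℤ)} {t : ℤ × ℤ} (h : IsGreedyChain R b e C)
    (hchain : (M ++ [t]).Pairwise Dominates)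
    (hM : ∀ s ∈ M, s ∈ (C : Multiset (ℤ × ℤ)).bind truncate + R) (hMe : ∀ s ∈ M, s.2 ≤ e)
    (hMb : ∀ s ∈ M, s.2 = e → s.1 < b) (ht : t ∈ (C : Multiset (ℤ × ℤ)).bind truncate) :
    (M.length : ℤ) < e - t.2 := by
  induction M generalizing b e C with
  | nil =>
    have := h.snd_le_of_mem_bind_truncate ht
    simp only [List.length_nil, Nat.cast_zero]
    omega
  | cons u M ih =>
    rw [List.cons_append, List.pairwise_cons] at hchain
    have hlen := length_le_of_pairwise_append hchain.2 (e := u.2 - 1)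
      fun s hs => by have := (hchain.1 s hs).2; omega
    simp only [List.mem_cons, forall_eq_or_imp] at hM hMe hMb
    rw [List.length_cons, Nat.cast_succ]
    rcases hMe.1.lt_or_eq with hu | hu
    · omega
    have huR : u ∈ R := (Multiset.mem_add.1 hM.1).resolve_left fun huT => by
      have := h.snd_le_of_mem_bind_truncate huT
      omega
    cases C with
    | nil => simp at ht
    | cons c C =>
      obtain ⟨-, -, hgreedy, hC⟩ := h
      have huc : u.1 ≤ c.1 := hgreedy u huR hu (hMb.1 hu)
      have hMc : ∀ s ∈ M ++ [t], s.1 < c.1 := fun s hs => (hchain.1 s hs).1.trans_le huc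
      have := ih hC hchain.2
        (fun s hs => by
          have hsc := hMc s (by simp [hs])
          rcases Multiset.mem_add.1 (hM.2 s hs) with hsT | hsR
          · exact Multiset.mem_add.2 (.inl (mem_bind_truncate_of_fst_lt hsT hsc))
          · exact Multiset.mem_add.2 (.inr hsR))
        (fun s hs => by have := (hchain.1 s (by simp [hs])).2; omega)
        (fun s hs _ => hMc s (by simp [hs]))
        (mem_bind_truncate_of_fst_lt ht (hMc t (by simp)))
      omega

lemma chainLengthLE_bind_truncate_add {n : ℤ} (h : IsGreedyChain R b e C)
    (hRe : ∀ s ∈ R, s.2 ≤ e) (hRb : ∀ s ∈ R, s.2 = e → s.1 < b) (hn : ChainLengthLE n (↑C + R)) :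
    ChainLengthLE n ((C : Multiset (ℤ × ℤ)).bind truncate + R) := by
  set T := (C : Multiset (ℤ × ℤ)).bind truncate
  have hTR : ∀ s ∈ T + R, s.2 ≤ e ∧ (s.2 = e → s.1 < b) := fun s hs => by
    rcases Multiset.mem_add.1 hs with hsT | hsR
    · have := h.snd_le_of_mem_bind_truncate hsT
      omega
    · exact ⟨hRe s hsR, hRb s hsR⟩
  intro L hL hchain
  have hmem : ∀ s ∈ L, s ∈ T + R := fun s hs => Multiset.mem_of_le hL (Multiset.mem_coe.2 hs)
  by_cases hLT : ∃ s ∈ L, s ∈ T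
  swap
  · push Not at hLT
    exact hn L ((Multiset.le_of_le_add_of_forall_notMem hL hLT).trans (Multiset.le_add_left _ _))
      hchain
  obtain ⟨M, t, N, rfl, htT, hNT⟩ := List.exists_eq_append_cons_forall_not hLT
  obtain ⟨d, hd, rfl⟩ := eq_of_mem_bind_truncate htT
  obtain ⟨C₁, C₂, rfl⟩ := List.append_of_mem hd
  have hM : (M.length : ℤ) < e - (d.2 - 1) :=
    h.length_lt_of_pairwise_append (hchain.sublist (by simp))
      (fun s hs => hmem s (by simp [hs])) (fun s hs => (hTR s (hmem s (by simp [hs]))).1)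
      (fun s hs => (hTR s (hmem s (by simp [hs]))).2) htT
  have hNR : (N : Multiset (ℤ × ℤ)) ≤ R := by
    refine Multiset.le_of_le_add_of_forall_notMem (le_trans (Multiset.coe_le.2 ?_) hL) hNT
    exact ((List.sublist_cons_self _ N).trans (List.sublist_append_right M _)).subperm
  have hL' := hn (C₁ ++ d :: N) ?_
    (pairwise_append_cons_of_le h.pairwise (List.pairwise_append.1 hchain).2.1 ⟨le_rfl, by simp⟩)
  · rw [h.snd_eq_of_eq_append] at hM
    simp only [List.length_append, List.length_cons, Nat.cast_add, Nat.cast_succ] at hL' ⊢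
    omega
  · calc ((C₁ ++ d :: N : List (ℤ × ℤ)) : Multiset (ℤ × ℤ))
        = ↑(C₁ ++ [d]) + ↑N := by simp
      _ ≤ ↑(C₁ ++ [d]) + ↑C₂ + R := by
        rw [add_assoc]
        exact add_le_add_right (hNR.trans (Multiset.le_add_left _ _)) _
      _ = ↑(C₁ ++ d :: C₂) + R := by simp

end IsGreedyChain

lemma exists_isGreedyChain_chainAux (n : ℕ) (rem : Multiset (ℤ × ℤ)) (b e : ℤ) :
    ∃ (D : List (ℤ × ℤ)) (R : Multiset (ℤ × ℤ)), rem = ↑D + R ∧ IsGreedyChain R b e D ∧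
      chainAux n rem b e = (D.length, (D : Multiset (ℤ × ℤ)).bind truncate + R) := by
  induction n generalizing rem b e with
  | zero => exact ⟨[], rem, by simp, trivial, by simp [chainAux]⟩
  | succ n ih =>
    by_cases hS : rem.filter (fun s => s.2 = e ∧ s.1 < b) = 0
    · exact ⟨[], rem, by simp, trivial, by simp [chainAux, hS]⟩
    set b' := msMaxD ((rem.filter fun s => s.2 = e ∧ s.1 < b).map Prod.fst) with hb'
    obtain ⟨s, hs, ⟨hse, hsb⟩, hsb'⟩ := exists_fst_eq_msMaxD_filter hS
    obtain rfl : s = (b', e) := Prod.ext hsb' hse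
    obtain ⟨D, R, hrem, hD, hchain⟩ := ih (rem.erase (b', e)) b' (e - 1)
    refine ⟨(b', e) :: D, R, ?_, ⟨rfl, hsb, fun s hs hse hsb => ?_, hD⟩, ?_⟩
    · rw [← Multiset.cons_erase hs, hrem, ← Multiset.cons_coe, Multiset.cons_add]
    · refine fst_le_msMaxD_filter (Multiset.mem_of_mem_erase (b := (b', e)) ?_) ⟨hse, hsb⟩
      rw [hrem]
      exact Multiset.mem_add.2 (Or.inr hs)
    · simp only [chainAux, hS, if_false, ← hb', hchain, List.length_cons, ← Multiset.cons_coe,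
        Multiset.cons_bind, add_assoc]

lemma exists_isGreedyChain_mwaStep {a : Multiset (ℤ × ℤ)} (ha : a ≠ 0) :
    ∃ (C : List (ℤ × ℤ)) (R : Multiset (ℤ × ℤ)) (b e : ℤ), a = ↑C + R ∧ IsGreedyChain R b e C ∧
      (∀ s ∈ R, s.2 ≤ e) ∧ (∀ s ∈ R, s.2 = e → s.1 < b) ∧
      mwaStep a = ((e - C.length + 1, e), (C : Multiset (ℤ × ℤ)).bind truncate + R) := by
  set x := msMaxD (a.map Prod.snd) with hx
  have hxa : ∀ s ∈ a, s.2 ≤ x := fun s hs => le_msMaxD (Multiset.mem_map_of_mem _ hs)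
  obtain ⟨s₀, hs₀, hs₀x⟩ := Multiset.mem_map.1 (msMaxD_mem (mt Multiset.map_eq_zero.1 ha))
  have hF : a.filter (fun s => s.2 = x) ≠ 0 :=
    Multiset.card_pos.1 <|
      Multiset.card_pos_iff_exists_mem.2 ⟨s₀, Multiset.mem_filter.2 ⟨hs₀, hs₀x⟩⟩
  set b₁ := msMaxD ((a.filter fun s => s.2 = x).map Prod.fst) with hb₁
  obtain ⟨s₁, hs₁, hs₁x, hs₁b⟩ := exists_fst_eq_msMaxD_filter hF
  obtain rfl : s₁ = (b₁, x) := Prod.ext hs₁b hs₁x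
  obtain ⟨D, R, hrem, hD, hchain⟩ :=
    exists_isGreedyChain_chainAux a.card (a.erase (b₁, x)) b₁ (x - 1)
  have ha' : a = ↑((b₁, x) :: D) + R := by
    rw [← Multiset.cons_erase hs₁, hrem, ← Multiset.cons_coe, Multiset.cons_add]
  have hR : ∀ s ∈ R, s ∈ a := fun s hs => by rw [ha']; exact Multiset.mem_add.2 (Or.inr hs)
  refine ⟨(b₁, x) :: D, R, b₁ + 1, x, ha', ⟨rfl, lt_add_one b₁, fun s _ _ _ => by omega, hD⟩,
    fun s hs => hxa s (hR s hs),
    fun s hs hsx => Int.lt_add_one_of_le (fst_le_msMaxD_filter (hR s hs) hsx), ?_⟩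
  simp only [mwaStep, ← hx, ← hb₁, hchain, List.length_cons, ← Multiset.cons_coe,
    Multiset.cons_bind, add_assoc]
  congr 2
  push_cast
  ring

lemma ChainLengthLE.mwaStep_fst {n : ℤ} {a : Multiset (ℤ × ℤ)} (hn : ChainLengthLE n a)
    (ha : a ≠ 0) : (mwaStep a).1.2 - (mwaStep a).1.1 + 1 ≤ n := by
  obtain ⟨C, R, b, e, rfl, hC, -, -, hstep⟩ := exists_isGreedyChain_mwaStep ha
  have := hn C (Multiset.le_add_right _ _) hC.pairwise
  rw [hstep]
  dsimp only
  omega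

lemma ChainLengthLE.mwaStep_snd {n : ℤ} {a : Multiset (ℤ × ℤ)} (hn : ChainLengthLE n a)
    (ha : a ≠ 0) : ChainLengthLE n (mwaStep a).2 := by
  obtain ⟨C, R, b, e, rfl, hC, hRe, hRb, hstep⟩ := exists_isGreedyChain_mwaStep ha
  rw [hstep]
  exact hC.chainLengthLE_bind_truncate_add hRe hRb hn

lemma ChainLengthLE.length_le_of_mem_mwaAux {n : ℤ} (k : ℕ) {a : Multiset (ℤ × ℤ)}
    (hn : ChainLengthLE n a) : ∀ s ∈ mwaAux k a, s.2 - s.1 + 1 ≤ n := by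
  induction k generalizing a with
  | zero => simp [mwaAux]
  | succ k ih =>
    by_cases ha : a = 0
    · simp [mwaAux, ha]
    simp only [mwaAux, ha, if_false, Multiset.mem_cons, forall_eq_or_imp]
    exact ⟨hn.mwaStep_fst ha, ih (hn.mwaStep_snd ha)⟩

theorem mwa_segment_length_bound_general
    (a : Multiset (ℤ × ℤ)) (x m : ℤ)
    (hends : ∀ s ∈ a, s.2 ∈ Finset.Icc x (x + m - 1)) :
    ∀ s ∈ MWA a, s.2 - s.1 + 1 ≤ m := by
  obtain rfl | ⟨s₀, hs₀⟩ := Multiset.empty_or_exists_mem a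
  · simp [MWA, mwaAux, msSize]
  have hm : 0 ≤ m := by
    have := Finset.mem_Icc.1 (hends s₀ hs₀)
    omega
  exact (chainLengthLE_of_snd_mem_Icc hm hends).length_le_of_mem_mwaAux (msSize a)

theorem mwa_segment_length_bound
    (a : Multiset (ℤ × ℤ)) (ha : ValidMS a) (x m : ℤ) (hm : 1 ≤ m)
    (hends : ∀ s ∈ a, s.2 ∈ Finset.Icc x (x + m - 1)) :
    ∀ s ∈ MWA a, s.2 - s.1 + 1 ≤ m :=
  mwa_segment_length_bound_general a x m hends
end

section
/- Let (A1,B1,C1,D1) and (A2,B2,C2,D2) be Speh quadruples with C1 = C2 and A1 ≤ A2, and set I_i = I(A_i,B_i,C_i,D_i) for i = 1, 2. Then there do not exist integers i < j < k with i, k ∈ I1 \ I2 and j ∈ I2 \ I1. -/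
/-! Points of `I₁ \ I₂` lie to the right of `A₂ ≥ A₁`, where `I₁` is just the interval
`[B₁+1, D₁+1]`; an interval cannot omit a point lying between two of its points. -/

theorem not_pPat_of_diff_subset_ordConnected {I J S : Set ℤ} (hS : S.OrdConnected)
    (hSI : S ⊆ I) (hdiff : I \ J ⊆ S) : ¬ PPat I J := by
  rintro ⟨i, j, k, hij, hjk, hi, hj, hk⟩
  exact hj.2 (hSI (hS.out (hdiff hi) (hdiff hk) ⟨hij.le, hjk.le⟩))

theorem Icc_subset_ISet (A B C D : ℤ) : Set.Icc (B + 1) (D + 1) ⊆ ISet A B C D := by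
  rw [ISet, Finset.coe_Icc]
  exact Set.subset_union_right

theorem le_of_notMem_ISet {A B C D z : ℤ} (hz : z ∉ ISet A B C D) : A ≤ z := by
  by_contra! h
  exact hz (Or.inl (Int.le_sub_one_of_lt h))

theorem mem_Icc_of_mem_ISet_of_le {A B C D z : ℤ} (hz : z ∈ ISet A B C D) (hAz : A ≤ z) :
    z ∈ Set.Icc (B + 1) (D + 1) := by
  rcases hz with hz | hz
  · exact absurd hAz (not_le.2 (Int.lt_of_le_sub_one hz))
  · simpa only [Finset.coe_Icc] using hz

theorem no_pattern_of_eq_C_general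
    (A1 B1 C1 D1 A2 B2 C2 D2 : ℤ)
    (hA : A1 ≤ A2) :
    ¬ PPat (ISet A1 B1 C1 D1) (ISet A2 B2 C2 D2) :=
  not_pPat_of_diff_subset_ordConnected Set.ordConnected_Icc (Icc_subset_ISet A1 B1 C1 D1)
    fun _ hz => mem_Icc_of_mem_ISet_of_le hz.1 (hA.trans (le_of_notMem_ISet hz.2))

theorem no_pattern_of_eq_C
    (A1 B1 C1 D1 A2 B2 C2 D2 : ℤ)
    (h1 : SpehQuad A1 B1 C1 D1) (h2 : SpehQuad A2 B2 C2 D2)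
    (hC : C1 = C2) (hA : A1 ≤ A2) :
    ¬ PPat (ISet A1 B1 C1 D1) (ISet A2 B2 C2 D2) :=
  no_pattern_of_eq_C_general A1 B1 C1 D1 A2 B2 C2 D2 hA
end

section
/- Let M1 = (A1,B1,C1,D1) and M2 = (A2,B2,C2,D2) be Speh quadruples, and set I_i = I(A_i,B_i,C_i,D_i) for i = 1, 2. Say that pattern P12 holds if there exist integers i < j < k with i, k ∈ I1 \ I2 and j ∈ I2 \ I1, and pattern P21 holds if there exist integers i < j < k with i, k ∈ I2 \ I1 and j ∈ I1 \ I2. Define R(M1,M2) as follows: if C2 < C1, R(M1,M2) means P12; if C1 < C2, R(M1,M2) means P21; if C1 = C2, R(M1,M2) means P12 and P21. Then R(M1,M2) holds if and only if [Finset.Icc A1 D1 ∪ Finset.Icc A2 D2 is a ℤ-segment and (M1 <strong M2 or M2 <strong M1)]. -/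
/-!
`I(A,B,C,D)` is the complement of `[A, B] ∪ [D + 2, ∞)`, so both patterns can be read off the
endpoints: `P12` holds exactly when `A2 < A1`, `B2 < B1`, `D2 < D1` and `A1 ≤ D2 + 1`
(the middle point of the pattern is forced into `[A1, B1] ∩ [B2 + 1, D2 + 1]`).
The union `[A1, D1] ∪ [A2, D2]` is a segment exactly when the two intervals meet or touch.
Since `A + D = B + C`, what remains is linear arithmetic in the three cases on `C1, C2`.
-/

open Finset

theorem mem_ISet {A B C D z : ℤ} : z ∈ ISet A B C D ↔ z ≤ A - 1 ∨ B + 1 ≤ z ∧ z ≤ D + 1 := by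
  simp [ISet]

theorem isZSegment_Icc_union_Icc_iff {a b c d : ℤ} (hab : a ≤ b) (hcd : c ≤ d) :
    IsZSegment (Icc a b ∪ Icc c d) ↔ c ≤ b + 1 ∧ a ≤ d + 1 := by
  constructor
  · rintro ⟨x, y, -, hS⟩
    have mem (z : ℤ) : (a ≤ z ∧ z ≤ b ∨ c ≤ z ∧ z ≤ d) ↔ x ≤ z ∧ z ≤ y := by
      simpa only [mem_union, mem_Icc] using Finset.ext_iff.mp hS z
    -- a gap between the two intervals would contain `b + 1` or `d + 1`
    have := mem a; have := mem b; have := mem c; have := mem d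
    have := mem (b + 1); have := mem (d + 1)
    omega
  · rintro ⟨hcb, had⟩
    refine ⟨min a c, max b d, by omega, ?_⟩
    ext z
    simp only [mem_union, mem_Icc]
    omega

theorem le_of_pPat_ISet {A1 B1 C1 D1 A2 B2 C2 D2 : ℤ}
    (h : PPat (ISet A1 B1 C1 D1) (ISet A2 B2 C2 D2)) :
    A2 < A1 ∧ B2 < B1 ∧ D2 < D1 ∧ A1 ≤ D2 + 1 := by
  obtain ⟨i, j, k, hij, hjk, ⟨hi1, hi2⟩, ⟨hj2, hj1⟩, ⟨hk1, hk2⟩⟩ := h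
  simp only [mem_ISet] at hi1 hi2 hj1 hj2 hk1 hk2
  have hk : B1 + 1 ≤ k ∧ k ≤ D1 + 1 := by omega
  have hj : A1 ≤ j ∧ j ≤ B1 := by omega
  have hi : A2 ≤ i ∧ i ≤ A1 - 1 := by omega
  have hj' : B2 + 1 ≤ j ∧ j ≤ D2 + 1 := by omega
  have hk' : D2 + 2 ≤ k := by omega
  omega

theorem pPat_ISet_of_lt {A1 B1 C1 D1 A2 B2 C2 D2 : ℤ} (hAB1 : A1 ≤ B1) (hBD1 : B1 ≤ D1)
    (hAB2 : A2 ≤ B2) (hBD2 : B2 ≤ D2) (h : A2 < A1 ∧ B2 < B1 ∧ D2 < D1 ∧ A1 ≤ D2 + 1) :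
    PPat (ISet A1 B1 C1 D1) (ISet A2 B2 C2 D2) := by
  refine ⟨A2, max (B2 + 1) A1, D1 + 1, by omega, by omega, ?_, ?_, ?_⟩ <;>
    simp only [Set.mem_sdiff, mem_ISet] <;> omega

theorem pPat_ISet_iff {A1 B1 C1 D1 A2 B2 C2 D2 : ℤ} (hAB1 : A1 ≤ B1) (hBD1 : B1 ≤ D1)
    (hAB2 : A2 ≤ B2) (hBD2 : B2 ≤ D2) :
    PPat (ISet A1 B1 C1 D1) (ISet A2 B2 C2 D2) ↔
      A2 < A1 ∧ B2 < B1 ∧ D2 < D1 ∧ A1 ≤ D2 + 1 :=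
  ⟨le_of_pPat_ISet, pPat_ISet_of_lt hAB1 hBD1 hAB2 hBD2⟩

theorem LNT_pattern_iff_linked_and_crossed
    (A1 B1 C1 D1 A2 B2 C2 D2 : ℤ)
    (h1 : SpehQuad A1 B1 C1 D1) (h2 : SpehQuad A2 B2 C2 D2) :
    (if C2 < C1 then PPat (ISet A1 B1 C1 D1) (ISet A2 B2 C2 D2)
      else if C1 < C2 then PPat (ISet A2 B2 C2 D2) (ISet A1 B1 C1 D1)
      else PPat (ISet A1 B1 C1 D1) (ISet A2 B2 C2 D2) ∧
        PPat (ISet A2 B2 C2 D2) (ISet A1 B1 C1 D1)) ↔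
    (IsZSegment (Finset.Icc A1 D1 ∪ Finset.Icc A2 D2) ∧
      (StrongLt A1 B1 C1 D1 A2 B2 C2 D2 ∨ StrongLt A2 B2 C2 D2 A1 B1 C1 D1)) := by
  obtain ⟨hAB1, hAC1, hsum1⟩ := h1
  obtain ⟨hAB2, hAC2, hsum2⟩ := h2
  have hBD1 : B1 ≤ D1 := by omega
  have hBD2 : B2 ≤ D2 := by omega
  rw [pPat_ISet_iff hAB1 hBD1 hAB2 hBD2, pPat_ISet_iff hAB2 hBD2 hAB1 hBD1,
    isZSegment_Icc_union_Icc_iff (hAB1.trans hBD1) (hAB2.trans hBD2)]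
  unfold StrongLt
  split_ifs <;> omega
end
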